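/- arXiv:0910.5714 — 2 statements merged into one kernel-verified Lean document; each statement's English description precedes it below -/
import Mathlib

section
/- For the bisection-auction tiling T_{k,0} and the function A_k: the average-case PAR with respect to party 1 equals (k+3)/4 − (k−1)/2^{k+2}, the average-case PAR with respect to party 2 equals (k+5)/4 + (k−1)/2^{k+2}, and hence the average-case subjective PAR of T_{k,0} equals (k+5)/4 + (k−1)/2^{k+2}. -/
open Finset

/-- The value space `{0,…,2^k−1} × {0,…,2^k−1}`. -/
def Vk (k : ℕ) : Finset (ℕ × ℕ) := Finset.range (2 ^ k) ×ˢ Finset.range (2 ^ k)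

/-- A tiling of `Vk k`: a finite collection of nonempty rectangles partitioning `Vk k`. -/
def IsTiling (k : ℕ) (T : Finset (Finset (ℕ × ℕ))) : Prop :=
  (∀ R ∈ T, ∃ S S' : Finset ℕ, R = S ×ˢ S') ∧
    (∀ R ∈ T, R.Nonempty) ∧ (∀ R ∈ T, R ⊆ Vk k) ∧ ∀ x ∈ Vk k, ∃! R, R ∈ T ∧ x ∈ R

/-- `f`-monochromaticity of a tiling. -/
def Mono {β : Type} (f : ℕ × ℕ → β) (T : Finset (Finset (ℕ × ℕ))) : Prop :=
  ∀ R ∈ T, ∀ x ∈ R, ∀ y ∈ R, f x = f y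

/-- The tile of `T` containing `x` (union of all tiles containing `x`; for a
tiling this is exactly the unique tile containing `x`). -/
def tileOf (T : Finset (Finset (ℕ × ℕ))) (x : ℕ × ℕ) : Finset (ℕ × ℕ) :=
  (T.filter fun R => x ∈ R).sup id

/-- The ideal region of `x`: the level set of `f x` inside `Vk k`. -/
def ideal {β : Type} [DecidableEq β] (k : ℕ) (f : ℕ × ℕ → β) (x : ℕ × ℕ) : Finset (ℕ × ℕ) :=
  (Vk k).filter fun y => f y = f x

/-- Average-case objective PAR of a tiling w.r.t. the uniform distribution. -/
def avgObjPAR {β : Type} [DecidableEq β] (k : ℕ) (f : ℕ × ℕ → β)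
    (T : Finset (Finset (ℕ × ℕ))) : ℚ :=
  (∑ x ∈ Vk k, ((ideal k f x).card : ℚ) / ((tileOf T x).card : ℚ)) / 2 ^ (2 * k)

/-- Average-case PAR with respect to party 1. -/
def avgPAR1 {β : Type} [DecidableEq β] (k : ℕ) (f : ℕ × ℕ → β)
    (T : Finset (Finset (ℕ × ℕ))) : ℚ :=
  (∑ x ∈ Vk k,
      (((Finset.range (2 ^ k)).filter fun y => f (x.1, y) = f x).card : ℚ) /
        (((Finset.range (2 ^ k)).filter fun y => (x.1, y) ∈ tileOf T x).card : ℚ)) /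
    2 ^ (2 * k)

/-- Average-case PAR with respect to party 2. -/
def avgPAR2 {β : Type} [DecidableEq β] (k : ℕ) (f : ℕ × ℕ → β)
    (T : Finset (Finset (ℕ × ℕ))) : ℚ :=
  (∑ x ∈ Vk k,
      (((Finset.range (2 ^ k)).filter fun y => f (y, x.2) = f x).card : ℚ) /
        (((Finset.range (2 ^ k)).filter fun y => (y, x.2) ∈ tileOf T x).card : ℚ)) /
    2 ^ (2 * k)

/-- The millionaires function: `1` if `x1 ≥ x2`, else `2`. -/
def Mil (x : ℕ × ℕ) : ℕ := if x.2 ≤ x.1 then 1 else 2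

/-- The second-price auction function. -/
def Auc (x : ℕ × ℕ) : ℕ × ℕ := if x.2 ≤ x.1 then (1, x.2) else (2, x.1)

/-- Translate a tile by `(a, a)`. -/
def shiftTile (a : ℕ) (R : Finset (ℕ × ℕ)) : Finset (ℕ × ℕ) :=
  R.image fun p => (p.1 + a, p.2 + a)

/-- The bisection-protocol tiling `B_k`. -/
def Btile : ℕ → Finset (Finset (ℕ × ℕ))
  | 0 => {{(0, 0)}}
  | j + 1 =>
    Btile j ∪ (Btile j).image (shiftTile (2 ^ j)) ∪
      {Finset.range (2 ^ j) ×ˢ Finset.Ico (2 ^ j) (2 ^ (j + 1)),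
        Finset.Ico (2 ^ j) (2 ^ (j + 1)) ×ˢ Finset.range (2 ^ j)}

/-- The bounded-bisection-auction tiling `T_{c,i}`. -/
def BBA : ℕ → ℕ → Finset (Finset (ℕ × ℕ))
  | 0, i =>
    (Finset.range (2 ^ i)).image (fun p => Finset.Ico p (2 ^ i) ×ˢ ({p} : Finset ℕ)) ∪
      (Finset.range (2 ^ i - 1)).image fun p => ({p} : Finset ℕ) ×ˢ Finset.Ico (p + 1) (2 ^ i)
  | c + 1, i =>
    BBA c i ∪ (BBA c i).image (shiftTile (2 ^ (c + i))) ∪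
      (Finset.range (2 ^ (c + i))).image
        (fun j => Finset.Ico (2 ^ (c + i)) (2 ^ (c + i + 1)) ×ˢ ({j} : Finset ℕ)) ∪
      (Finset.range (2 ^ (c + i))).image fun j =>
        ({j} : Finset ℕ) ×ˢ Finset.Ico (2 ^ (c + i)) (2 ^ (c + i + 1))

/-- The public-good function: `true` iff `x1 + x2 ≥ 2^k − 1` ("Build"). -/
def PG (k : ℕ) (x : ℕ × ℕ) : Bool := decide (2 ^ k - 1 ≤ x.1 + x.2)

/-- The truthful public-good function: `none` = "Do Not Build". -/
def TPG (c : ℕ) (x : ℕ × ℕ) : Option (ℕ × ℕ) :=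
  if x.1 + x.2 < c then none else some (c - x.2, c - x.1)

/-- The tiling of `Vk k` into singleton cells (sealed-bid auction). -/
def sealedTiling (k : ℕ) : Finset (Finset (ℕ × ℕ)) :=
  (Vk k).image fun x => ({x} : Finset (ℕ × ℕ))

/-!
The tile of `T_{k,0}` through `x` is a product `tileFst k x ×ˢ tileSnd k x`, computed quadrant by
quadrant: in the two off-diagonal quadrants of `Vk (k+1)` it is a full row or column of length
`2^k`, in the two diagonal quadrants it is a (translated) tile of `T_{k,0}`. Hence both PAR sums,
and the auxiliary counts of row and column tiles, satisfy linear recurrences in `k` obtained by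
splitting `Vk (k+1)` into its four quadrants; solving them gives the closed forms. The two PARs
differ by `1/2 + (k-1)/2^(k+1) ≥ 0`, so party 2 attains the maximum.
-/

namespace BisectionAuction

variable {k : ℕ} {x : ℕ × ℕ}

lemma mem_Vk : x ∈ Vk k ↔ x.1 < 2 ^ k ∧ x.2 < 2 ^ k := by
  simp [Vk]

lemma swap_mem_Vk (hx : x ∈ Vk k) : x.swap ∈ Vk k := by
  rw [mem_Vk] at *
  exact hx.symm

lemma Vk_zero : Vk 0 = {(0, 0)} := rfl

lemma card_Vk (k : ℕ) : ((Vk k).card : ℚ) = 2 ^ k * 2 ^ k := by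
  simp [Vk]

lemma forall_mem_Vk_succ {P : ℕ × ℕ → Prop} :
    (∀ x ∈ Vk (k + 1), P x) ↔ ∀ x ∈ Vk k,
      P x ∧ P (x.1, x.2 + 2 ^ k) ∧ P (x.1 + 2 ^ k, x.2) ∧ P (x.1 + 2 ^ k, x.2 + 2 ^ k) := by
  simp only [mem_Vk, Nat.two_pow_succ]
  constructor
  · intro h x hx
    exact ⟨h _ (by omega), h _ (by simp; omega), h _ (by simp; omega), h _ (by simp; omega)⟩
  · rintro h ⟨a, b⟩ ⟨ha, hb⟩
    have low_or_high : ∀ n < 2 ^ k + 2 ^ k, ∃ m < 2 ^ k, n = m ∨ n = m + 2 ^ k := fun n hn =>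
      if hn' : n < 2 ^ k then ⟨n, hn', .inl rfl⟩ else ⟨n - 2 ^ k, by omega, .inr (by omega)⟩
    obtain ⟨a, ha', rfl | rfl⟩ := low_or_high a ha <;>
      obtain ⟨b, hb', rfl | rfl⟩ := low_or_high b hb <;>
      have := h (a, b) ⟨ha', hb'⟩ <;> tauto

lemma sum_Vk_succ {M : Type*} [AddCommMonoid M] (k : ℕ) (f : ℕ × ℕ → M) :
    ∑ x ∈ Vk (k + 1), f x = ∑ x ∈ Vk k,
      (f x + f (x.1, x.2 + 2 ^ k) + f (x.1 + 2 ^ k, x.2) + f (x.1 + 2 ^ k, x.2 + 2 ^ k)) := by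
  simp only [Vk, Nat.two_pow_succ, sum_product, sum_range_add, sum_add_distrib,
    add_comm (2 ^ k)]
  abel

lemma sum_range_two_pow_cast (k : ℕ) :
    ∑ a ∈ range (2 ^ k), (a : ℚ) = 2 ^ k * (2 ^ k - 1) / 2 := by
  have h := congrArg (Nat.cast : ℕ → ℚ) (sum_range_id_mul_two (2 ^ k))
  push_cast [Nat.cast_pred (Nat.two_pow_pos k)] at h
  linarith

lemma sum_Vk_fst_cast (k : ℕ) :
    ∑ x ∈ Vk k, (x.1 : ℚ) = 2 ^ k * (2 ^ k * (2 ^ k - 1) / 2) := by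
  simp [Vk, sum_product, ← mul_sum, sum_range_two_pow_cast]

lemma sum_Vk_snd_cast (k : ℕ) :
    ∑ x ∈ Vk k, (x.2 : ℚ) = 2 ^ k * (2 ^ k * (2 ^ k - 1) / 2) := by
  simp [Vk, sum_product, sum_range_two_pow_cast]

lemma four_pow_eq (n : ℕ) : (4 : ℚ) ^ n = 2 ^ n * 2 ^ n := by
  rw [← mul_pow]
  norm_num

lemma card_Ico_two_pow (k : ℕ) : (Ico (2 ^ k) (2 ^ (k + 1))).card = 2 ^ k := by
  rw [Nat.card_Ico, Nat.two_pow_succ, Nat.add_sub_cancel]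

lemma card_image_add_two_pow (S : Finset ℕ) : (S.image (· + 2 ^ k)).card = S.card :=
  card_image_of_injective S (add_left_injective _)

lemma tileOf_union (A B : Finset (Finset (ℕ × ℕ))) (x : ℕ × ℕ) :
    tileOf (A ∪ B) x = tileOf A x ∪ tileOf B x := by
  simp only [tileOf, filter_union, sup_union, sup_eq_union]

lemma tileOf_eq_empty {T : Finset (Finset (ℕ × ℕ))} (h : ∀ R ∈ T, x ∉ R) : tileOf T x = ∅ := by
  rw [tileOf, filter_false_of_mem h, sup_empty, bot_eq_empty]

lemma mem_shiftTile {a : ℕ} {R : Finset (ℕ × ℕ)} :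
    x ∈ shiftTile a R ↔ a ≤ x.1 ∧ a ≤ x.2 ∧ (x.1 - a, x.2 - a) ∈ R := by
  simp only [shiftTile, mem_image, Prod.ext_iff]
  constructor
  · rintro ⟨p, hp, h1, h2⟩
    obtain rfl : (x.1 - a, x.2 - a) = p := Prod.ext (by omega) (by omega)
    exact ⟨by omega, by omega, hp⟩
  · rintro ⟨h1, h2, hx⟩
    exact ⟨_, hx, by omega, by omega⟩

lemma shiftTile_product (a : ℕ) (S S' : Finset ℕ) :
    shiftTile a (S ×ˢ S') = S.image (· + a) ×ˢ S'.image (· + a) :=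
  prodMap_image_product (· + a) (· + a) S S'

lemma tileOf_image_shiftTile (T : Finset (Finset (ℕ × ℕ))) (a : ℕ) (x : ℕ × ℕ) :
    tileOf (T.image (shiftTile a)) x =
      if a ≤ x.1 ∧ a ≤ x.2 then shiftTile a (tileOf T (x.1 - a, x.2 - a)) else ∅ := by
  split_ifs with hx
  · have : T.filter (fun R => x ∈ shiftTile a R) = T.filter (fun R => (x.1 - a, x.2 - a) ∈ R) :=
      filter_congr fun R _ => by simp only [mem_shiftTile, hx, true_and]
    rw [tileOf, filter_image, sup_image, Function.id_comp, this, tileOf, sup_eq_biUnion,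
      sup_eq_biUnion, shiftTile, biUnion_image]
    rfl
  · exact tileOf_eq_empty fun R hR hxR => by
      obtain ⟨R, -, rfl⟩ := mem_image.1 hR
      exact hx ⟨(mem_shiftTile.1 hxR).1, (mem_shiftTile.1 hxR).2.1⟩

lemma tileOf_image_prod_singleton (I J : Finset ℕ) (x : ℕ × ℕ) :
    tileOf (J.image fun j => I ×ˢ {j}) x = if x.1 ∈ I ∧ x.2 ∈ J then I ×ˢ {x.2} else ∅ := by
  have : J.filter (fun j => x ∈ I ×ˢ {j}) = if x.1 ∈ I ∧ x.2 ∈ J then {x.2} else ∅ := by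
    ext j
    split_ifs with hx <;> simp only [mem_filter, mem_product, mem_singleton] <;> grind
  rw [tileOf, filter_image, this]
  split_ifs <;> simp

lemma tileOf_image_singleton_prod (I J : Finset ℕ) (x : ℕ × ℕ) :
    tileOf (J.image fun j => {j} ×ˢ I) x = if x.1 ∈ J ∧ x.2 ∈ I then {x.1} ×ˢ I else ∅ := by
  have : J.filter (fun j => x ∈ {j} ×ˢ I) = if x.1 ∈ J ∧ x.2 ∈ I then {x.1} else ∅ := by
    ext j
    split_ifs with hx <;> simp only [mem_filter, mem_product, mem_singleton] <;> grind
  rw [tileOf, filter_image, this]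
  split_ifs <;> simp

lemma BBA_succ (k : ℕ) : BBA (k + 1) 0 =
    BBA k 0 ∪ (BBA k 0).image (shiftTile (2 ^ k)) ∪
      (range (2 ^ k)).image (fun j => Ico (2 ^ k) (2 ^ (k + 1)) ×ˢ ({j} : Finset ℕ)) ∪
      (range (2 ^ k)).image (fun j => ({j} : Finset ℕ) ×ˢ Ico (2 ^ k) (2 ^ (k + 1))) :=
  rfl

lemma subset_Vk_of_mem_BBA : ∀ {k : ℕ} {R : Finset (ℕ × ℕ)}, R ∈ BBA k 0 → R ⊆ Vk k
  | 0, R, hR => by revert R; decide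
  | k + 1, R, hR => by
    intro x hx
    rw [mem_Vk, Nat.two_pow_succ]
    simp only [BBA_succ, mem_union, mem_image, mem_range] at hR
    rcases hR with ((hR | ⟨R, hR, rfl⟩) | ⟨j, hj, rfl⟩) | ⟨j, hj, rfl⟩
    · have := mem_Vk.1 (subset_Vk_of_mem_BBA hR hx)
      omega
    · obtain ⟨h1, h2, hx⟩ := mem_shiftTile.1 hx
      have := mem_Vk.1 (subset_Vk_of_mem_BBA hR hx)
      simp only at this
      omega
    all_goals
      simp only [mem_product, mem_Ico, mem_singleton, Nat.two_pow_succ] at hx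
      omega

lemma tileOf_BBA_eq_empty (hx : x ∉ Vk k) : tileOf (BBA k 0) x = ∅ :=
  tileOf_eq_empty fun _ hR hxR => hx (subset_Vk_of_mem_BBA hR hxR)

lemma tileOf_BBA_succ (k : ℕ) (x : ℕ × ℕ) : tileOf (BBA (k + 1) 0) x =
    tileOf (BBA k 0) x ∪
      (if 2 ^ k ≤ x.1 ∧ 2 ^ k ≤ x.2 then
        shiftTile (2 ^ k) (tileOf (BBA k 0) (x.1 - 2 ^ k, x.2 - 2 ^ k)) else ∅) ∪
      (if x.1 ∈ Ico (2 ^ k) (2 ^ (k + 1)) ∧ x.2 ∈ range (2 ^ k) then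
        Ico (2 ^ k) (2 ^ (k + 1)) ×ˢ {x.2} else ∅) ∪
      (if x.1 ∈ range (2 ^ k) ∧ x.2 ∈ Ico (2 ^ k) (2 ^ (k + 1)) then
        {x.1} ×ˢ Ico (2 ^ k) (2 ^ (k + 1)) else ∅) := by
  rw [BBA_succ, tileOf_union, tileOf_union, tileOf_union, tileOf_image_shiftTile,
    tileOf_image_prod_singleton, tileOf_image_singleton_prod]

def tileFst : ℕ → ℕ × ℕ → Finset ℕ
  | 0, _ => {0}
  | k + 1, x =>
    if x.1 < 2 ^ k then
      if x.2 < 2 ^ k then tileFst k x else {x.1}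
    else
      if x.2 < 2 ^ k then Ico (2 ^ k) (2 ^ (k + 1))
      else (tileFst k (x.1 - 2 ^ k, x.2 - 2 ^ k)).image (· + 2 ^ k)

/-- `T_{k,0}` is symmetric under swapping the two coordinates. -/
def tileSnd (k : ℕ) (x : ℕ × ℕ) : Finset ℕ := tileFst k x.swap

lemma tileFst_succ_low_low (h1 : x.1 < 2 ^ k) (h2 : x.2 < 2 ^ k) :
    tileFst (k + 1) x = tileFst k x := by
  rw [tileFst, if_pos h1, if_pos h2]

lemma tileFst_succ_low_high (h1 : x.1 < 2 ^ k) :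
    tileFst (k + 1) (x.1, x.2 + 2 ^ k) = {x.1} := by
  rw [tileFst, if_pos h1, if_neg (by omega)]

lemma tileFst_succ_high_low (h2 : x.2 < 2 ^ k) :
    tileFst (k + 1) (x.1 + 2 ^ k, x.2) = Ico (2 ^ k) (2 ^ (k + 1)) := by
  rw [tileFst, if_neg (by omega), if_pos h2]

lemma tileFst_succ_high_high :
    tileFst (k + 1) (x.1 + 2 ^ k, x.2 + 2 ^ k) = (tileFst k x).image (· + 2 ^ k) := by
  rw [tileFst, if_neg (by omega), if_neg (by omega), Nat.add_sub_cancel, Nat.add_sub_cancel]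

lemma tileSnd_succ_low_low (h1 : x.1 < 2 ^ k) (h2 : x.2 < 2 ^ k) :
    tileSnd (k + 1) x = tileSnd k x :=
  tileFst_succ_low_low h2 h1

lemma tileSnd_succ_low_high (h1 : x.1 < 2 ^ k) :
    tileSnd (k + 1) (x.1, x.2 + 2 ^ k) = Ico (2 ^ k) (2 ^ (k + 1)) :=
  tileFst_succ_high_low (x := x.swap) h1

lemma tileSnd_succ_high_low (h2 : x.2 < 2 ^ k) :
    tileSnd (k + 1) (x.1 + 2 ^ k, x.2) = {x.2} :=
  tileFst_succ_low_high (x := x.swap) h2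

lemma tileSnd_succ_high_high :
    tileSnd (k + 1) (x.1 + 2 ^ k, x.2 + 2 ^ k) = (tileSnd k x).image (· + 2 ^ k) :=
  tileFst_succ_high_high (x := x.swap)

lemma tileFst_subset_range : ∀ {k : ℕ}, ∀ x ∈ Vk k, tileFst k x ⊆ range (2 ^ k)
  | 0 => fun _ _ => by simp [tileFst]
  | k + 1 => forall_mem_Vk_succ.2 fun x hx => by
    have hk := tileFst_subset_range x hx
    rw [mem_Vk] at hx
    rw [tileFst_succ_low_low hx.1 hx.2, tileFst_succ_low_high hx.1, tileFst_succ_high_low hx.2,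
      tileFst_succ_high_high]
    simp only [subset_iff, mem_range, mem_singleton, mem_Ico, mem_image, Nat.two_pow_succ] at hk ⊢
    refine ⟨?_, ?_, ?_, ?_⟩ <;> grind

lemma fst_mem_tileFst : ∀ {k : ℕ}, ∀ x ∈ Vk k, x.1 ∈ tileFst k x
  | 0 => fun x hx => by simpa [tileFst] using (mem_Vk.1 hx).1
  | k + 1 => forall_mem_Vk_succ.2 fun x hx => by
    have hk := fst_mem_tileFst x hx
    rw [mem_Vk] at hx
    rw [tileFst_succ_low_low hx.1 hx.2, tileFst_succ_low_high hx.1, tileFst_succ_high_low hx.2,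
      tileFst_succ_high_high]
    simp [hk, Nat.two_pow_succ, hx.1]

lemma tileSnd_subset_range (hx : x ∈ Vk k) : tileSnd k x ⊆ range (2 ^ k) :=
  tileFst_subset_range _ (swap_mem_Vk hx)

lemma snd_mem_tileSnd (hx : x ∈ Vk k) : x.2 ∈ tileSnd k x :=
  fst_mem_tileFst _ (swap_mem_Vk hx)

theorem tileOf_BBA : ∀ {k : ℕ}, ∀ x ∈ Vk k, tileOf (BBA k 0) x = tileFst k x ×ˢ tileSnd k x
  | 0 => fun x hx => by
    obtain rfl : x = (0, 0) := by simp_all [mem_Vk, Prod.ext_iff]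
    decide
  | k + 1 => forall_mem_Vk_succ.2 fun x hx => by
    have hk := tileOf_BBA x hx
    rw [mem_Vk] at hx
    have h1 : ¬ 2 ^ k ≤ x.1 := by omega
    have h2 : ¬ 2 ^ k ≤ x.2 := by omega
    simp only [tileOf_BBA_succ, tileFst_succ_low_low hx.1 hx.2, tileFst_succ_low_high hx.1,
      tileFst_succ_high_low hx.2, tileFst_succ_high_high, tileSnd_succ_low_low hx.1 hx.2,
      tileSnd_succ_low_high hx.1, tileSnd_succ_high_low hx.2, tileSnd_succ_high_high]
    rw [tileOf_BBA_eq_empty (x := (x.1, x.2 + 2 ^ k)) (by simp [mem_Vk]),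
      tileOf_BBA_eq_empty (x := (x.1 + 2 ^ k, x.2)) (by simp [mem_Vk]),
      tileOf_BBA_eq_empty (x := (x.1 + 2 ^ k, x.2 + 2 ^ k)) (by simp [mem_Vk])]
    simp [hk, h1, h2, hx.1, hx.2, Nat.two_pow_succ, shiftTile_product]

lemma filter_mem_tileOf_BBA_fst (hx : x ∈ Vk k) :
    (range (2 ^ k)).filter (fun y => (x.1, y) ∈ tileOf (BBA k 0) x) = tileSnd k x := by
  ext y
  simp only [tileOf_BBA x hx, mem_filter, mem_product, fst_mem_tileFst x hx, true_and,
    and_iff_right_iff_imp]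
  exact fun hy => tileSnd_subset_range hx hy

lemma filter_mem_tileOf_BBA_snd (hx : x ∈ Vk k) :
    (range (2 ^ k)).filter (fun y => (y, x.2) ∈ tileOf (BBA k 0) x) = tileFst k x := by
  ext y
  simp only [tileOf_BBA x hx, mem_filter, mem_product, snd_mem_tileSnd hx, and_true,
    and_iff_right_iff_imp]
  exact fun hy => tileFst_subset_range x hx hy

def fstLevelCard (k : ℕ) (x : ℕ × ℕ) : ℚ := if x.2 ≤ x.1 then 1 else 2 ^ k - (x.1 + 1)

def sndLevelCard (k : ℕ) (x : ℕ × ℕ) : ℚ := if x.2 ≤ x.1 then 2 ^ k - x.2 else 1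

lemma card_filter_Auc_fst (hx : x ∈ Vk k) :
    (((range (2 ^ k)).filter fun y => Auc (x.1, y) = Auc x).card : ℚ) = fstLevelCard k x := by
  rw [mem_Vk] at hx
  by_cases h : x.2 ≤ x.1
  · have : (range (2 ^ k)).filter (fun y => Auc (x.1, y) = Auc x) = {x.2} := by
      ext y
      simp only [mem_filter, mem_range, mem_singleton, Auc, if_pos h]
      split_ifs <;> simp [Prod.ext_iff] <;> omega
    simp [this, fstLevelCard, h]
  · have : (range (2 ^ k)).filter (fun y => Auc (x.1, y) = Auc x) = Ico (x.1 + 1) (2 ^ k) := by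
      ext y
      simp only [mem_filter, mem_range, mem_Ico, Auc, if_neg h]
      split_ifs <;> simp [Prod.ext_iff] <;> omega
    rw [this, Nat.card_Ico, Nat.cast_sub (by omega), fstLevelCard, if_neg h]
    push_cast
    ring

lemma card_filter_Auc_snd (hx : x ∈ Vk k) :
    (((range (2 ^ k)).filter fun y => Auc (y, x.2) = Auc x).card : ℚ) = sndLevelCard k x := by
  rw [mem_Vk] at hx
  by_cases h : x.2 ≤ x.1
  · have : (range (2 ^ k)).filter (fun y => Auc (y, x.2) = Auc x) = Ico x.2 (2 ^ k) := by
      ext y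
      simp only [mem_filter, mem_range, mem_Ico, Auc, if_pos h]
      split_ifs <;> simp [Prod.ext_iff] <;> omega
    rw [this, Nat.card_Ico, Nat.cast_sub (by omega), sndLevelCard, if_pos h]
    push_cast
    ring
  · have : (range (2 ^ k)).filter (fun y => Auc (y, x.2) = Auc x) = {x.1} := by
      ext y
      simp only [mem_filter, mem_range, mem_singleton, Auc, if_neg h]
      split_ifs <;> simp [Prod.ext_iff] <;> omega
    simp [this, sndLevelCard, h]

def par₁ (k : ℕ) (x : ℕ × ℕ) : ℚ := fstLevelCard k x / (tileSnd k x).card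

def par₂ (k : ℕ) (x : ℕ × ℕ) : ℚ := sndLevelCard k x / (tileFst k x).card

/-- Summed over a tile, the shares add up to one, so `∑ x, colTileShare k x` counts the column
tiles. -/
def colTileShare (k : ℕ) (x : ℕ × ℕ) : ℚ := if x.1 < x.2 then ((tileSnd k x).card : ℚ)⁻¹ else 0

def rowTileShare (k : ℕ) (x : ℕ × ℕ) : ℚ := if x.2 ≤ x.1 then ((tileFst k x).card : ℚ)⁻¹ else 0

lemma colTileShare_quadrants (hx : x ∈ Vk k) :
    colTileShare (k + 1) x + colTileShare (k + 1) (x.1, x.2 + 2 ^ k) +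
        colTileShare (k + 1) (x.1 + 2 ^ k, x.2) + colTileShare (k + 1) (x.1 + 2 ^ k, x.2 + 2 ^ k) =
      2 * colTileShare k x + (2 ^ k)⁻¹ := by
  obtain ⟨h1, h2⟩ := mem_Vk.1 hx
  simp only [colTileShare, tileSnd_succ_low_low h1 h2, tileSnd_succ_low_high h1,
    tileSnd_succ_high_low h2, tileSnd_succ_high_high, card_image_add_two_pow, card_Ico_two_pow,
    card_singleton]
  split_ifs <;> first | omega | (push_cast; ring)

lemma rowTileShare_quadrants (hx : x ∈ Vk k) :
    rowTileShare (k + 1) x + rowTileShare (k + 1) (x.1, x.2 + 2 ^ k) +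
        rowTileShare (k + 1) (x.1 + 2 ^ k, x.2) + rowTileShare (k + 1) (x.1 + 2 ^ k, x.2 + 2 ^ k) =
      2 * rowTileShare k x + (2 ^ k)⁻¹ := by
  obtain ⟨h1, h2⟩ := mem_Vk.1 hx
  simp only [rowTileShare, tileFst_succ_low_low h1 h2, tileFst_succ_low_high h1,
    tileFst_succ_high_low h2, tileFst_succ_high_high, card_image_add_two_pow, card_Ico_two_pow,
    card_singleton]
  split_ifs <;> first | omega | (push_cast; ring)

lemma par₁_quadrants (hx : x ∈ Vk k) :
    par₁ (k + 1) x + par₁ (k + 1) (x.1, x.2 + 2 ^ k) +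
        par₁ (k + 1) (x.1 + 2 ^ k, x.2) + par₁ (k + 1) (x.1 + 2 ^ k, x.2 + 2 ^ k) =
      2 * par₁ k x + 2 ^ k * colTileShare k x + (2 ^ (k + 1) - (x.1 + 1)) / 2 ^ k + 1 := by
  obtain ⟨h1, h2⟩ := mem_Vk.1 hx
  simp only [par₁, colTileShare, fstLevelCard, tileSnd_succ_low_low h1 h2,
    tileSnd_succ_low_high h1,
    tileSnd_succ_high_low h2, tileSnd_succ_high_high, card_image_add_two_pow, card_Ico_two_pow,
    card_singleton]
  split_ifs <;> first | omega | (push_cast; ring)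

lemma par₂_quadrants (hx : x ∈ Vk k) :
    par₂ (k + 1) x + par₂ (k + 1) (x.1, x.2 + 2 ^ k) +
        par₂ (k + 1) (x.1 + 2 ^ k, x.2) + par₂ (k + 1) (x.1 + 2 ^ k, x.2 + 2 ^ k) =
      2 * par₂ k x + 2 ^ k * rowTileShare k x + 1 + (2 ^ (k + 1) - x.2) / 2 ^ k := by
  obtain ⟨h1, h2⟩ := mem_Vk.1 hx
  simp only [par₂, rowTileShare, sndLevelCard, tileFst_succ_low_low h1 h2,
    tileFst_succ_low_high h1,
    tileFst_succ_high_low h2, tileFst_succ_high_high, card_image_add_two_pow, card_Ico_two_pow,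
    card_singleton]
  split_ifs <;> first | omega | (push_cast; ring)

lemma sum_colTileShare (k : ℕ) : ∑ x ∈ Vk k, colTileShare k x = k * 2 ^ k / 2 := by
  induction k with
  | zero => simp [Vk_zero, colTileShare]
  | succ k ih =>
    rw [sum_Vk_succ, sum_congr rfl fun x hx => colTileShare_quadrants hx, sum_add_distrib,
      ← mul_sum, ih, sum_const, nsmul_eq_mul, card_Vk]
    field_simp
    push_cast
    ring

lemma sum_rowTileShare (k : ℕ) : ∑ x ∈ Vk k, rowTileShare k x = (k + 2) * 2 ^ k / 2 := by
  induction k with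
  | zero =>
    rw [Vk_zero, sum_singleton]
    norm_num [rowTileShare, tileFst]
  | succ k ih =>
    rw [sum_Vk_succ, sum_congr rfl fun x hx => rowTileShare_quadrants hx, sum_add_distrib,
      ← mul_sum, ih, sum_const, nsmul_eq_mul, card_Vk]
    field_simp
    push_cast
    ring

lemma sum_par₁ (k : ℕ) :
    ∑ x ∈ Vk k, par₁ k x = (4 ^ k * (k + 3) - 2 ^ k * ((k : ℚ) - 1)) / 4 := by
  induction k with
  | zero => norm_num [Vk_zero, par₁, fstLevelCard, tileSnd, tileFst]
  | succ k ih =>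
    rw [sum_Vk_succ, sum_congr rfl fun x hx => par₁_quadrants hx]
    simp only [sum_add_distrib, ← mul_sum, ih, sum_colTileShare, ← sum_div, sum_sub_distrib,
      sum_Vk_fst_cast, sum_const, nsmul_eq_mul, card_Vk, four_pow_eq]
    field_simp
    push_cast
    ring

lemma sum_par₂ (k : ℕ) :
    ∑ x ∈ Vk k, par₂ k x = (4 ^ k * (k + 5) + 2 ^ k * ((k : ℚ) - 1)) / 4 := by
  induction k with
  | zero => norm_num [Vk_zero, par₂, sndLevelCard, tileFst]
  | succ k ih =>
    rw [sum_Vk_succ, sum_congr rfl fun x hx => par₂_quadrants hx]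
    simp only [sum_add_distrib, ← mul_sum, ih, sum_rowTileShare, ← sum_div, sum_sub_distrib,
      sum_Vk_snd_cast, sum_const, nsmul_eq_mul, card_Vk, four_pow_eq]
    field_simp
    push_cast
    ring

lemma avgPAR1_BBA_eq_sum (k : ℕ) :
    avgPAR1 k Auc (BBA k 0) = (∑ x ∈ Vk k, par₁ k x) / 2 ^ (2 * k) := by
  rw [avgPAR1]
  congr 1
  refine sum_congr rfl fun x hx => ?_
  rw [card_filter_Auc_fst hx, filter_mem_tileOf_BBA_fst hx, par₁]

lemma avgPAR2_BBA_eq_sum (k : ℕ) :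
    avgPAR2 k Auc (BBA k 0) = (∑ x ∈ Vk k, par₂ k x) / 2 ^ (2 * k) := by
  rw [avgPAR2]
  congr 1
  refine sum_congr rfl fun x hx => ?_
  rw [card_filter_Auc_snd hx, filter_mem_tileOf_BBA_snd hx, par₂]

lemma avgPAR1_BBA (k : ℕ) :
    avgPAR1 k Auc (BBA k 0) = ((k : ℚ) + 3) / 4 - ((k : ℚ) - 1) / 2 ^ (k + 2) := by
  rw [avgPAR1_BBA_eq_sum, sum_par₁, two_mul, pow_add, four_pow_eq, pow_add]
  field_simp
  ring

lemma avgPAR2_BBA (k : ℕ) :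
    avgPAR2 k Auc (BBA k 0) = ((k : ℚ) + 5) / 4 + ((k : ℚ) - 1) / 2 ^ (k + 2) := by
  rw [avgPAR2_BBA_eq_sum, sum_par₂, two_mul, pow_add, four_pow_eq, pow_add]
  field_simp
  ring

end BisectionAuction

open BisectionAuction

theorem stmt17_general (k : ℕ) :
    avgPAR1 k Auc (BBA k 0) = ((k : ℚ) + 3) / 4 - ((k : ℚ) - 1) / 2 ^ (k + 2) ∧
      avgPAR2 k Auc (BBA k 0) = ((k : ℚ) + 5) / 4 + ((k : ℚ) - 1) / 2 ^ (k + 2) ∧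
      max (avgPAR1 k Auc (BBA k 0)) (avgPAR2 k Auc (BBA k 0)) =
        ((k : ℚ) + 5) / 4 + ((k : ℚ) - 1) / 2 ^ (k + 2) := by
  refine ⟨avgPAR1_BBA k, avgPAR2_BBA k, ?_⟩
  rw [avgPAR1_BBA, avgPAR2_BBA, max_eq_right]
  have h : -(1 / 4 : ℚ) ≤ ((k : ℚ) - 1) / 2 ^ (k + 2) := by
    have : (1 : ℚ) ≤ 2 ^ k := one_le_pow₀ (by norm_num)
    rw [le_div_iff₀ (by positivity), pow_add]
    linarith
  linarith

/-- for the bisection-auction tiling `T_{k,0}` and `A_k`: the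
average-case PAR w.r.t. party 1 equals `(k+3)/4 − (k−1)/2^{k+2}`, the
average-case PAR w.r.t. party 2 equals `(k+5)/4 + (k−1)/2^{k+2}`, and hence the
average-case subjective PAR equals `(k+5)/4 + (k−1)/2^{k+2}`. -/
theorem stmt17 (k : ℕ) (hk : 1 ≤ k) :
    avgPAR1 k Auc (BBA k 0) = ((k : ℚ) + 3) / 4 - ((k : ℚ) - 1) / 2 ^ (k + 2) ∧
      avgPAR2 k Auc (BBA k 0) = ((k : ℚ) + 5) / 4 + ((k : ℚ) - 1) / 2 ^ (k + 2) ∧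
      max (avgPAR1 k Auc (BBA k 0)) (avgPAR2 k Auc (BBA k 0)) =
        ((k : ℚ) + 5) / 4 + ((k : ℚ) - 1) / 2 ^ (k + 2) :=
  stmt17_general k
end

section
/- Every A_k-monochromatic tiling of V has average-case objective PAR at most 2^{k+1}/3 + 1/(3·2^k), and the tiling of V into singleton cells (induced by the sealed-bid auction) is A_k-monochromatic and achieves average-case objective PAR exactly 2^{k+1}/3 + 1/(3·2^k). -/
open Finset

/-!
Every tile contains its point, so `|R^T(x)| ≥ 1`, and the objective PAR of any tiling is at most
the mean size of the ideal regions, which the singleton tiling attains. For `A_k` and `N = 2^k` the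
level sets are the column segments `{(i, j) : j ≤ i < N}` of size `N - j` and the row segments
`{(i, j) : i < j < N}` of size `N - 1 - i`; each is counted once per point, so
`∑ₓ |R^I(x)| = ∑_{m<N} ((m + 1)^2 + m^2) = (2N^3 + N)/3`.
-/

lemma mem_Vk {k : ℕ} {x : ℕ × ℕ} : x ∈ Vk k ↔ x.1 < 2 ^ k ∧ x.2 < 2 ^ k := by
  simp [Vk]

lemma mem_sealedTiling {k : ℕ} {R : Finset (ℕ × ℕ)} :
    R ∈ sealedTiling k ↔ ∃ x ∈ Vk k, {x} = R :=
  Finset.mem_image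

lemma isTiling_sealedTiling (k : ℕ) : IsTiling k (sealedTiling k) := by
  refine ⟨?_, ?_, ?_, fun x hx => ⟨{x}, ⟨mem_image_of_mem _ hx, mem_singleton_self x⟩, ?_⟩⟩
  · rintro R hR
    obtain ⟨x, -, rfl⟩ := mem_sealedTiling.mp hR
    exact ⟨{x.1}, {x.2}, by simp⟩
  · rintro R hR
    obtain ⟨x, -, rfl⟩ := mem_sealedTiling.mp hR
    exact singleton_nonempty x
  · rintro R hR
    obtain ⟨x, hx, rfl⟩ := mem_sealedTiling.mp hR
    exact singleton_subset_iff.mpr hx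
  · rintro R ⟨hR, hxR⟩
    obtain ⟨y, -, rfl⟩ := mem_sealedTiling.mp hR
    rw [mem_singleton.mp hxR]

lemma mono_sealedTiling {β : Type} (f : ℕ × ℕ → β) (k : ℕ) : Mono f (sealedTiling k) := by
  rintro R hR x hx y hy
  obtain ⟨z, -, rfl⟩ := mem_sealedTiling.mp hR
  rw [mem_singleton.mp hx, mem_singleton.mp hy]

lemma tileOf_sealedTiling {k : ℕ} {x : ℕ × ℕ} (hx : x ∈ Vk k) :
    tileOf (sealedTiling k) x = {x} := by
  have : (sealedTiling k).filter (fun R => x ∈ R) = {{x}} := by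
    ext R
    simp only [mem_filter, mem_sealedTiling, mem_singleton]
    constructor
    · rintro ⟨⟨y, -, rfl⟩, hxy⟩
      rw [mem_singleton.mp hxy]
    · rintro rfl
      exact ⟨⟨x, hx, rfl⟩, mem_singleton_self x⟩
  rw [tileOf, this, sup_singleton, id]

lemma mem_tileOf {k : ℕ} {T : Finset (Finset (ℕ × ℕ))} (hT : IsTiling k T) {x : ℕ × ℕ}
    (hx : x ∈ Vk k) : x ∈ tileOf T x := by
  obtain ⟨R, ⟨hRT, hxR⟩, -⟩ := hT.2.2.2 x hx
  exact le_sup (f := id) (mem_filter.mpr ⟨hRT, hxR⟩) hxR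

lemma avgObjPAR_sealedTiling {β : Type} [DecidableEq β] (k : ℕ) (f : ℕ × ℕ → β) :
    avgObjPAR k f (sealedTiling k) = (∑ x ∈ Vk k, (#(ideal k f x) : ℚ)) / 2 ^ (2 * k) := by
  rw [avgObjPAR]
  congr 1
  refine sum_congr rfl fun x hx => ?_
  rw [tileOf_sealedTiling hx, card_singleton, Nat.cast_one, div_one]

lemma avgObjPAR_le_avgObjPAR_sealedTiling {β : Type} [DecidableEq β] {k : ℕ} {f : ℕ × ℕ → β}
    {T : Finset (Finset (ℕ × ℕ))} (hT : IsTiling k T) :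
    avgObjPAR k f T ≤ avgObjPAR k f (sealedTiling k) := by
  rw [avgObjPAR_sealedTiling, avgObjPAR]
  gcongr with x hx
  have : 0 < #(tileOf T x) := card_pos.mpr ⟨x, mem_tileOf hT hx⟩
  exact div_le_self (Nat.cast_nonneg _) (by exact_mod_cast this)

lemma ideal_Auc_of_le {k : ℕ} {x : ℕ × ℕ} (h : x.2 ≤ x.1) :
    ideal k Auc x = Ico x.2 (2 ^ k) ×ˢ {x.2} := by
  ext ⟨i, j⟩
  simp only [ideal, Auc, if_pos h, mem_filter, mem_Vk, mem_product, mem_Ico, mem_singleton]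
  grind

lemma ideal_Auc_of_lt {k : ℕ} {x : ℕ × ℕ} (h : x.1 < x.2) :
    ideal k Auc x = {x.1} ×ˢ Ico (x.1 + 1) (2 ^ k) := by
  ext ⟨i, j⟩
  simp only [ideal, Auc, if_neg h.not_ge, mem_filter, mem_Vk, mem_product, mem_Ico, mem_singleton]
  grind

lemma card_ideal_Auc (k : ℕ) (x : ℕ × ℕ) :
    #(ideal k Auc x) = if x.2 ≤ x.1 then 2 ^ k - x.2 else 2 ^ k - 1 - x.1 := by
  split_ifs with h
  · simp [ideal_Auc_of_le h]
  · simp [ideal_Auc_of_lt (not_le.mp h)]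
    omega

lemma sum_card_ideal_Auc (k : ℕ) :
    ∑ x ∈ Vk k, #(ideal k Auc x) = ∑ m ∈ range (2 ^ k), ((m + 1) ^ 2 + m ^ 2) := by
  rw [Vk]
  set N := 2 ^ k
  have hsplit : ∀ x : ℕ × ℕ, #(ideal k Auc x) =
      (if x.2 ≤ x.1 then N - x.2 else 0) + (if x.1 + 1 ≤ x.2 then N - (x.1 + 1) else 0) := by
    intro x
    rw [card_ideal_Auc]
    split_ifs <;> omega
  have hcount : ∀ a, #{i ∈ range N | a ≤ i} = N - a := by
    intro a
    rw [range_eq_Ico, Ico_filter_le, Nat.card_Ico, Nat.zero_max]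
  simp only [hsplit, sum_add_distrib]
  rw [sum_product_right, sum_product]
  simp only [← sum_filter, sum_const, hcount, smul_eq_mul]
  rw [← sum_range_reflect (fun m => (m + 1) ^ 2), ← sum_range_reflect (fun m => m ^ 2)]
  congr 1 <;> refine sum_congr rfl fun j hj => ?_
  · rw [sq, show N - 1 - j + 1 = N - j by have := mem_range.mp hj; omega]
  · rw [sq, show N - 1 - j = N - (j + 1) by omega]

lemma three_mul_sum_range_succ_sq_add_sq (n : ℕ) :
    3 * ∑ m ∈ range n, ((m + 1) ^ 2 + m ^ 2) = 2 * n ^ 3 + n := by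
  induction n with
  | zero => rfl
  | succ n ih => rw [sum_range_succ, mul_add, ih]; ring

lemma avgObjPAR_Auc_sealedTiling (k : ℕ) :
    avgObjPAR k Auc (sealedTiling k) = (2 ^ (k + 1) : ℚ) / 3 + 1 / (3 * 2 ^ k) := by
  have hsum : (∑ x ∈ Vk k, (#(ideal k Auc x) : ℚ)) = (2 * (2 ^ k) ^ 3 + 2 ^ k) / 3 := by
    rw [eq_div_iff three_ne_zero, mul_comm, ← Nat.cast_sum, sum_card_ideal_Auc]
    exact_mod_cast three_mul_sum_range_succ_sq_add_sq (2 ^ k)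
  rw [avgObjPAR_sealedTiling, hsum]
  field_simp
  ring

theorem stmt18_general (k : ℕ) :
    (∀ T : Finset (Finset (ℕ × ℕ)), IsTiling k T → Mono Auc T →
        avgObjPAR k Auc T ≤ (2 ^ (k + 1) : ℚ) / 3 + 1 / (3 * 2 ^ k)) ∧
      IsTiling k (sealedTiling k) ∧ Mono Auc (sealedTiling k) ∧
      avgObjPAR k Auc (sealedTiling k) = (2 ^ (k + 1) : ℚ) / 3 + 1 / (3 * 2 ^ k) := by
  refine ⟨fun T hT _ => ?_, isTiling_sealedTiling k, mono_sealedTiling Auc k,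
    avgObjPAR_Auc_sealedTiling k⟩
  rw [← avgObjPAR_Auc_sealedTiling k]
  exact avgObjPAR_le_avgObjPAR_sealedTiling hT

/-- every `A_k`-monochromatic tiling of `V` has average-case
objective PAR at most `2^{k+1}/3 + 1/(3·2^k)`, and the tiling into singleton
cells (sealed-bid auction) is `A_k`-monochromatic and achieves exactly this. -/
theorem stmt18 (k : ℕ) (hk : 1 ≤ k) :
    (∀ T : Finset (Finset (ℕ × ℕ)), IsTiling k T → Mono Auc T →
        avgObjPAR k Auc T ≤ (2 ^ (k + 1) : ℚ) / 3 + 1 / (3 * 2 ^ k)) ∧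
      IsTiling k (sealedTiling k) ∧ Mono Auc (sealedTiling k) ∧
      avgObjPAR k Auc (sealedTiling k) = (2 ^ (k + 1) : ℚ) / 3 + 1 / (3 * 2 ^ k) :=
  stmt18_general k
end
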